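/- Let α ∈ (0,1], f : ℝⁿ → ℝᵐ with component functions f₁,...,fₘ, and g : ℝᵐ → ℝᵖ. Let a = (a₁,...,aₙ) ∈ ℝⁿ with each aᵢ > 0 and suppose fᵢ(a) > 0 for all i = 1,...,m. If f is α-differentiable at a and g is α-differentiable at f(a), then the conformable Jacobian matrices satisfy (g ∘ f)^α(a) = g^α(f(a)) · diag(f₁(a)^{α-1}, ..., fₘ(a)^{α-1}) · f^α(a). -/

import Mathlib

open Filter Topology

/-- The conformably shifted point `(a₁ + h₁a₁^{1-α}, ..., aₙ + hₙaₙ^{1-α})`. -/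
noncomputable def confShift {n : ℕ} (α : ℝ) (a h : EuclideanSpace ℝ (Fin n)) :
    EuclideanSpace ℝ (Fin n) :=
  WithLp.toLp 2 (fun i => a i + h i * a i ^ (1 - α))

/-- `f` is conformably `α`-differentiable at `a` with conformable derivative the
linear map `L`, i.e. `lim_{h→0} ‖f(a₁+h₁a₁^{1-α},...,aₙ+hₙaₙ^{1-α}) - f(a) - L(h)‖/‖h‖ = 0`. -/
def ConformableAt {n : ℕ} {F : Type*} [NormedAddCommGroup F] [NormedSpace ℝ F]
    (α : ℝ) (f : EuclideanSpace ℝ (Fin n) → F) (a : EuclideanSpace ℝ (Fin n))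
    (L : EuclideanSpace ℝ (Fin n) →ₗ[ℝ] F) : Prop :=
  Filter.Tendsto (fun h : EuclideanSpace ℝ (Fin n) =>
      ‖f (confShift α a h) - f a - L h‖ / ‖h‖) (𝓝[≠] 0) (𝓝 0)

/-- The conformable Jacobian matrix of a linear map `L : ℝⁿ → ℝᵐ` with respect to the
standard bases. -/
noncomputable def confJacobian {n m : ℕ}
    (L : EuclideanSpace ℝ (Fin n) →ₗ[ℝ] EuclideanSpace ℝ (Fin m)) :
    Matrix (Fin m) (Fin n) ℝ :=
  Matrix.of fun i j => L (EuclideanSpace.single j 1) i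

/-!
Write `D_a` for the diagonal operator `diag(a₁^{1-α}, ..., aₙ^{1-α})`. Then
`confShift α a h = a + D_a h`, and when every `aᵢ > 0` the operator `D_a` is invertible with
inverse `diag(aᵢ^{α-1})`. Hence `f` is `α`-differentiable at `a` with derivative `L` exactly when
it is Fréchet differentiable at `a` with derivative `L ∘ D_a⁻¹`. The ordinary chain rule now gives
`g ∘ f` the Fréchet derivative `M ∘ D_{f(a)}⁻¹ ∘ L ∘ D_a⁻¹`, i.e. the conformable derivative
`M ∘ D_{f(a)}⁻¹ ∘ L`, and Jacobians multiply under composition.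
-/

open Matrix

noncomputable def diagCLM {ι : Type*} [Fintype ι] [DecidableEq ι] (c : ι → ℝ) :
    EuclideanSpace ℝ ι →L[ℝ] EuclideanSpace ℝ ι :=
  toEuclideanCLM (𝕜 := ℝ) (diagonal c)

@[simp]
lemma diagCLM_apply {ι : Type*} [Fintype ι] [DecidableEq ι] (c : ι → ℝ)
    (h : EuclideanSpace ℝ ι) (i : ι) : diagCLM c h i = c i * h i := by
  simp [diagCLM, mulVec_diagonal]

section Conformable

variable {n : ℕ} {α : ℝ} {a : EuclideanSpace ℝ (Fin n)}

@[simp]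
lemma confShift_zero (α : ℝ) (a : EuclideanSpace ℝ (Fin n)) : confShift α a 0 = a := by
  ext i; simp [confShift]

lemma confShift_eq_add (α : ℝ) (a h : EuclideanSpace ℝ (Fin n)) :
    confShift α a h = a + diagCLM (fun i => a i ^ (1 - α)) h := by
  ext i; simp [confShift, mul_comm]

lemma hasFDerivAt_confShift (α : ℝ) (a h : EuclideanSpace ℝ (Fin n)) :
    HasFDerivAt (confShift α a) (diagCLM fun i => a i ^ (1 - α)) h := by
  simp_rw [funext (confShift_eq_add α a)]
  exact (diagCLM _).hasFDerivAt.const_add a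

lemma diagCLM_rpow_comp_rpow (ha : ∀ i, 0 < a i) {β γ : ℝ} (hβγ : β + γ = 0) :
    (diagCLM fun i => a i ^ β).comp (diagCLM fun i => a i ^ γ) = .id ℝ _ := by
  ext h i
  simp [← mul_assoc, ← Real.rpow_add (ha i), hβγ]

lemma confShift_diagCLM_sub (ha : ∀ i, 0 < a i) (x : EuclideanSpace ℝ (Fin n)) :
    confShift α a (diagCLM (fun i => a i ^ (α - 1)) (x - a)) = x := by
  rw [confShift_eq_add, ← ContinuousLinearMap.comp_apply,
    diagCLM_rpow_comp_rpow ha (by ring), ContinuousLinearMap.id_apply, add_sub_cancel]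

variable {F : Type*} [NormedAddCommGroup F] [NormedSpace ℝ F]

lemma conformableAt_iff_hasFDerivAt_comp_confShift {f : EuclideanSpace ℝ (Fin n) → F}
    {L : EuclideanSpace ℝ (Fin n) →ₗ[ℝ] F} :
    ConformableAt α f a L ↔ HasFDerivAt (f ∘ confShift α a) L.toContinuousLinearMap 0 := by
  set φ := fun h => ‖f (confShift α a h) - f a - L h‖ / ‖h‖
  -- `φ 0 = 0` (division by `‖0‖ = 0`), so the limit over `𝓝[≠] 0` is continuity of `φ` at `0`.
  have hφ0 : φ 0 = 0 := by simp [φ]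
  have hderiv : HasFDerivAt (f ∘ confShift α a) L.toContinuousLinearMap 0 ↔ ContinuousAt φ 0 := by
    rw [hasFDerivAt_iff_tendsto, ContinuousAt, hφ0]
    simp [φ, div_eq_inv_mul]
  rw [hderiv, ← continuousWithinAt_compl_self, ContinuousWithinAt, hφ0]
  rfl

theorem conformableAt_iff_hasFDerivAt (ha : ∀ i, 0 < a i) {f : EuclideanSpace ℝ (Fin n) → F}
    {L : EuclideanSpace ℝ (Fin n) →ₗ[ℝ] F} :
    ConformableAt α f a L ↔
      HasFDerivAt f (L.toContinuousLinearMap.comp (diagCLM fun i => a i ^ (α - 1))) a := by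
  rw [conformableAt_iff_hasFDerivAt_comp_confShift]
  set S := diagCLM fun i => a i ^ (α - 1)
  constructor
  · intro h
    have hunshift : HasFDerivAt (fun x => S (x - a)) S a := by
      simpa only [map_sub] using S.hasFDerivAt.sub_const (S a)
    have h0 : HasFDerivAt (f ∘ confShift α a) L.toContinuousLinearMap (S (a - a)) := by
      simpa using h
    have hcomp := h0.comp a hunshift
    have hcancel : (f ∘ confShift α a) ∘ (fun x => S (x - a)) = f :=
      funext fun x => congrArg f (confShift_diagCLM_sub ha x)
    rwa [hcancel] at hcomp
  · intro h
    have h0 : HasFDerivAt f (L.toContinuousLinearMap.comp S) (confShift α a 0) := by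
      rwa [confShift_zero]
    have hcomp := h0.comp 0 (hasFDerivAt_confShift α a 0)
    rwa [ContinuousLinearMap.comp_assoc, diagCLM_rpow_comp_rpow ha (by ring),
      ContinuousLinearMap.comp_id] at hcomp

theorem ConformableAt.comp {m : ℕ} {f : EuclideanSpace ℝ (Fin n) → EuclideanSpace ℝ (Fin m)}
    {g : EuclideanSpace ℝ (Fin m) → F} {L : EuclideanSpace ℝ (Fin n) →ₗ[ℝ] EuclideanSpace ℝ (Fin m)}
    {M : EuclideanSpace ℝ (Fin m) →ₗ[ℝ] F} (ha : ∀ i, 0 < a i) (hfa : ∀ i, 0 < f a i)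
    (hf : ConformableAt α f a L) (hg : ConformableAt α g (f a) M) :
    ConformableAt α (g ∘ f) a
      (M ∘ₗ (diagCLM fun i => f a i ^ (α - 1)).toLinearMap ∘ₗ L) := by
  rw [conformableAt_iff_hasFDerivAt ha] at hf ⊢
  rw [conformableAt_iff_hasFDerivAt hfa] at hg
  have hN : (M ∘ₗ (diagCLM fun i => f a i ^ (α - 1)).toLinearMap ∘ₗ L).toContinuousLinearMap.comp
      (diagCLM fun i => a i ^ (α - 1)) =
      (M.toContinuousLinearMap.comp (diagCLM fun i => f a i ^ (α - 1))).comp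
        (L.toContinuousLinearMap.comp (diagCLM fun i => a i ^ (α - 1))) := rfl
  rw [hN]
  exact hg.comp a hf

end Conformable

section Jacobian

variable {n m p : ℕ}

lemma confJacobian_eq_toMatrix (L : EuclideanSpace ℝ (Fin n) →ₗ[ℝ] EuclideanSpace ℝ (Fin m)) :
    confJacobian L = LinearMap.toMatrix (EuclideanSpace.basisFun (Fin n) ℝ).toBasis
      (EuclideanSpace.basisFun (Fin m) ℝ).toBasis L := by
  ext i j
  simp [confJacobian, LinearMap.toMatrix_apply]

lemma confJacobian_comp (M : EuclideanSpace ℝ (Fin m) →ₗ[ℝ] EuclideanSpace ℝ (Fin p))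
    (L : EuclideanSpace ℝ (Fin n) →ₗ[ℝ] EuclideanSpace ℝ (Fin m)) :
    confJacobian (M ∘ₗ L) = confJacobian M * confJacobian L := by
  simp only [confJacobian_eq_toMatrix]
  exact LinearMap.toMatrix_comp _ _ _ M L

lemma confJacobian_diagCLM (c : Fin n → ℝ) :
    confJacobian (diagCLM c).toLinearMap = diagonal c := by
  ext i j
  simp [confJacobian, diagonal_apply]

end Jacobian

theorem conformable_chain_rule_jacobian_general {n m p : ℕ} (α : ℝ)
    (f : EuclideanSpace ℝ (Fin n) → EuclideanSpace ℝ (Fin m))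
    (g : EuclideanSpace ℝ (Fin m) → EuclideanSpace ℝ (Fin p))
    (a : EuclideanSpace ℝ (Fin n)) (ha : ∀ i, 0 < a i) (hfa : ∀ i, 0 < f a i)
    (L : EuclideanSpace ℝ (Fin n) →ₗ[ℝ] EuclideanSpace ℝ (Fin m))
    (M : EuclideanSpace ℝ (Fin m) →ₗ[ℝ] EuclideanSpace ℝ (Fin p))
    (hf : ConformableAt α f a L) (hg : ConformableAt α g (f a) M) :
    ∃ N : EuclideanSpace ℝ (Fin n) →ₗ[ℝ] EuclideanSpace ℝ (Fin p),
      ConformableAt α (g ∘ f) a N ∧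
      confJacobian N
        = confJacobian M * Matrix.diagonal (fun i => f a i ^ (α - 1)) * confJacobian L := by
  refine ⟨_, hf.comp ha hfa hg, ?_⟩
  rw [confJacobian_comp, confJacobian_comp, confJacobian_diagCLM, Matrix.mul_assoc]

/-- Chain rule in Jacobian form: if `f` is conformably `α`-differentiable at `a`
(each `aᵢ > 0`, each `fᵢ(a) > 0`) and `g` is conformably `α`-differentiable at `f(a)`,
then `(g ∘ f)^α(a) = g^α(f(a)) · diag(f₁(a)^{α-1},...,fₘ(a)^{α-1}) · f^α(a)`. -/
theorem conformable_chain_rule_jacobian {n m p : ℕ} (α : ℝ) (hα : α ∈ Set.Ioc (0:ℝ) 1)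
    (f : EuclideanSpace ℝ (Fin n) → EuclideanSpace ℝ (Fin m))
    (g : EuclideanSpace ℝ (Fin m) → EuclideanSpace ℝ (Fin p))
    (a : EuclideanSpace ℝ (Fin n)) (ha : ∀ i, 0 < a i) (hfa : ∀ i, 0 < f a i)
    (L : EuclideanSpace ℝ (Fin n) →ₗ[ℝ] EuclideanSpace ℝ (Fin m))
    (M : EuclideanSpace ℝ (Fin m) →ₗ[ℝ] EuclideanSpace ℝ (Fin p))
    (hf : ConformableAt α f a L) (hg : ConformableAt α g (f a) M) :
    ∃ N : EuclideanSpace ℝ (Fin n) →ₗ[ℝ] EuclideanSpace ℝ (Fin p),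
      ConformableAt α (g ∘ f) a N ∧
      confJacobian N
        = confJacobian M * Matrix.diagonal (fun i => f a i ^ (α - 1)) * confJacobian L :=
  conformable_chain_rule_jacobian_general α f g a ha hfa L M hf hg
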